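/- arXiv:2102.07240 — 3 statements merged into one kernel-verified Lean document; each statement's English description precedes it below -/
import Mathlib

section
/- Let n = 5f−1 with f ≥ 1. If at least 3f−1 honest parties each vote for the same value v (and honest parties vote for at most one value), then any multiset of 4f−1 signed vote/timeout messages from distinct parties contains at most 2f messages whose value differs from v (counting ⊥ messages as differing). -/
/-! Every message that differs from `v` comes from a party outside the voting set `V`, and there
are at most `(5f - 1) - (3f - 1) = 2f` such parties. -/

theorem Finset.card_filter_not_le_card_sub_card {α : Type*} [Fintype α] [DecidableEq α]
    {p : α → Prop} [DecidablePred p] (M V : Finset α) (hV : ∀ x ∈ V, p x) :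
    (M.filter fun x => ¬p x).card ≤ Fintype.card α - V.card :=
  calc (M.filter fun x => ¬p x).card ≤ Vᶜ.card :=
        card_le_card fun x hx => mem_compl.2 fun hxV => (mem_filter.1 hx).2 (hV x hxV)
    _ = Fintype.card α - V.card := card_compl V

theorem at_most_2f_conflicting_messages_general (f : ℕ)
    (α : Type*) [Fintype α] [DecidableEq α] (hcard : Fintype.card α = 5 * f - 1)
    (Value : Type*) [DecidableEq Value] (v : Value)
    (msgval : α → Option Value)
    (V : Finset α) (hV : V.card ≥ 3 * f - 1)
    (hvote : ∀ p ∈ V, msgval p = some v)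
    (M : Finset α) :
    (M.filter (fun p => msgval p ≠ some v)).card ≤ 2 * f := by
  have hconflict : (M.filter (fun p => msgval p ≠ some v)).card ≤ Fintype.card α - V.card :=
    M.card_filter_not_le_card_sub_card V hvote
  omega

/-- With `n = 5f−1` parties: if at least `3f−1` honest parties each send a message
with value `v`, then any set of `4f−1` messages from distinct parties contains at
most `2f` messages whose value differs from `v` (with `none` modeling `⊥`). -/
theorem at_most_2f_conflicting_messages (f : ℕ) (hf : f ≥ 1)
    (α : Type*) [Fintype α] [DecidableEq α] (hcard : Fintype.card α = 5 * f - 1)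
    (Value : Type*) [DecidableEq Value] (v : Value)
    (Honest : Finset α) (hHonest : Honest.card = 4 * f - 1)
    (Byz : Finset α) (hByz : Byz = Finset.univ \ Honest) (hByzcard : Byz.card ≤ f)
    (msgval : α → Option Value)
    (V : Finset α) (hVH : V ⊆ Honest) (hV : V.card ≥ 3 * f - 1)
    (hvote : ∀ p ∈ V, msgval p = some v)
    (M : Finset α) (hM : M.card = 4 * f - 1) :
    (M.filter (fun p => msgval p ≠ some v)).card ≤ 2 * f :=
  at_most_2f_conflicting_messages_general f α hcard Value v msgval V hV hvote M
end

section
/- In the (Δ+1.5δ)-BB protocol, if the broadcaster is honest, sends its proposal at global time 0, every honest party receives it by global time δ ≤ Δ, honest parties vote with parameter d = δ at local time t_prop + Δ − 0.5δ, and vote messages are delivered within δ, then every honest party receives f+1 matching votes by global time Δ + 1.5δ, and at each honest party the elapsed local time between receiving the proposal and receiving the votes is at most Δ + 1.5δ, satisfying the commit condition t_votes − t_prop ≤ Δ + 1.5d. -/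
theorem Nat.succ_le_of_two_mul_lt_of_sub_le {n f k : ℕ} (hnf : 2 * f < n) (hk : n - f ≤ k) :
    f + 1 ≤ k := by
  omega

theorem vote_arrival_le {δ Δ tp a : ℝ} (htp : tp ≤ δ) (ha : a ≤ (tp + Δ - δ / 2) + δ) :
    a ≤ Δ + 3 * δ / 2 := by
  linarith

theorem good_case_latency_bb3_general (n f : ℕ) (hnf : 2 * f < n)
    (δ Δ : ℝ)
    (α : Type*)
    (H : Finset α) (hH : H.card ≥ n - f)
    (recvProp : α → ℝ)
    (hrecv : ∀ p ∈ H, 0 ≤ recvProp p ∧ recvProp p ≤ δ)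
    (arrive : α → α → ℝ)  -- `arrive p q`: global time q receives p's vote
    (harrive : ∀ p ∈ H, ∀ q ∈ H,
      recvProp p + Δ - δ / 2 ≤ arrive p q ∧ arrive p q ≤ (recvProp p + Δ - δ / 2) + δ) :
    H.card ≥ f + 1 ∧
    ∀ p ∈ H, ∀ q ∈ H,
      arrive p q ≤ Δ + 3 * δ / 2 ∧
      arrive p q - recvProp q ≤ Δ + 3 * δ / 2 := by
  refine ⟨Nat.succ_le_of_two_mul_lt_of_sub_le hnf hH, fun p hp q hq => ?_⟩
  have hby : arrive p q ≤ Δ + 3 * δ / 2 :=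
    vote_arrival_le (hrecv p hp).2 (harrive p hp q hq).2
  -- `q` received the proposal at global time `≥ 0`, so its local interval is no longer.
  exact ⟨hby, by linarith [(hrecv q hq).1]⟩

/-- Good-case latency of the (Δ+1.5δ)-BB protocol: with an honest broadcaster sending
at global time 0, proposals delivered by `δ ≤ Δ`, honest parties voting with parameter
`d = δ` at local time `t_prop + Δ − 0.5δ`, and votes delivered within `δ`, every honest
party receives the `≥ f+1` honest votes by global time `Δ + 1.5δ`, and the elapsed time
between its proposal receipt and the votes' arrival is at most `Δ + 1.5δ`. -/
theorem good_case_latency_bb3 (n f : ℕ) (hnf : 2 * f < n)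
    (δ Δ : ℝ) (hδ : 0 ≤ δ) (hδΔ : δ ≤ Δ)
    (α : Type*) [Fintype α] [DecidableEq α] (hcard : Fintype.card α = n)
    (H : Finset α) (hH : H.card ≥ n - f)
    (recvProp : α → ℝ)
    (hrecv : ∀ p ∈ H, 0 ≤ recvProp p ∧ recvProp p ≤ δ)
    (arrive : α → α → ℝ)  -- `arrive p q`: global time q receives p's vote
    (harrive : ∀ p ∈ H, ∀ q ∈ H,
      recvProp p + Δ - δ / 2 ≤ arrive p q ∧ arrive p q ≤ (recvProp p + Δ - δ / 2) + δ) :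
    H.card ≥ f + 1 ∧
    ∀ p ∈ H, ∀ q ∈ H,
      arrive p q ≤ Δ + 3 * δ / 2 ∧
      arrive p q - recvProp q ≤ Δ + 3 * δ / 2 :=
  good_case_latency_bb3_general n f hnf δ Δ α H hH recvProp hrecv arrive harrive
end

section
/- In the 2-round asynchronous BRB protocol with n ≥ 3f+1: if the broadcaster is honest with input v, then at least n−f honest parties vote for v, n−f > f so no value v′ ≠ v can gather n−f votes, and every honest party commits v; formally, any set of n−f votes must contain at least n−2f ≥ f+1 honest votes, and since honest parties only vote v, all n−f-sized vote sets are for v. -/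
/-!
There are at least `n - f` honest parties, and `n ≥ 3f + 1` gives `n - f ≥ 2f + 1 > f`. A quorum of
`n - f` distinct voters loses at most `f` members to the Byzantine set, so it keeps at least
`n - 2f ≥ f + 1 > 0` honest voters; any one of them voted `v`, which pins the quorum's common value.
-/

namespace BRB

variable {α Value : Type*} [DecidableEq α]

lemma card_sub_card_le_card_filter_notMem (S B : Finset α) :
    S.card - B.card ≤ (S.filter fun p => p ∉ B).card := by
  rw [Finset.filter_notMem_eq_sdiff]
  exact Finset.le_card_sdiff B S

lemma eq_of_filter_notMem_nonempty {vote : α → Option Value} {v w : Value} {S B : Finset α}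
    (honest_vote : ∀ p, p ∉ B → vote p = some v) (hS : ∀ p ∈ S, vote p = some w)
    (hne : (S.filter fun p => p ∉ B).Nonempty) : w = v := by
  obtain ⟨p, hp⟩ := hne
  rw [Finset.mem_filter] at hp
  exact Option.some_injective _ ((hS p hp.1).symm.trans (honest_vote p hp.2))

end BRB

/-- Validity of the 2-round asynchronous BRB protocol with `n ≥ 3f+1`: if every
honest party (there are at least `n−f` of them) votes the honest broadcaster's
value `v`, then `n − f ≥ 2f + 1 > f`, any set of `n−f` votes from distinct parties
for a single value `w` contains at least `n − 2f ≥ f+1` honest votes, and hence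
`w = v`. -/
theorem brb_validity (n f : ℕ) (hn : n ≥ 3 * f + 1)
    (α : Type*) [Fintype α] [DecidableEq α] (hcard : Fintype.card α = n)
    (Value : Type*) (v : Value)
    (Byz : Finset α) (hByz : Byz.card ≤ f)
    (vote : α → Option Value)
    (honest_vote : ∀ p, p ∉ Byz → vote p = some v) :
    (Finset.univ \ Byz).card ≥ n - f ∧
    n - f ≥ 2 * f + 1 ∧ n - f > f ∧
    (∀ (w : Value) (S : Finset α), S.card = n - f →
      (∀ p ∈ S, vote p = some w) →
      (S.filter (fun p => p ∉ Byz)).card ≥ n - 2 * f ∧ w = v) := by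
  have honest_card : (Finset.univ \ Byz).card ≥ n - f := by
    rw [Finset.card_univ_sdiff, hcard]
    omega
  refine ⟨honest_card, by omega, by omega, fun w S hS hvote => ?_⟩
  have honest_in_quorum : (S.filter fun p => p ∉ Byz).card ≥ n - 2 * f := by
    have := BRB.card_sub_card_le_card_filter_notMem S Byz
    omega
  refine ⟨honest_in_quorum, BRB.eq_of_filter_notMem_nonempty honest_vote hvote ?_⟩
  exact Finset.card_pos.mp (by omega)
end
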